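/- Let F be an invertible IFS on a compact metric space X. Then the chain recurrent set R(F) equals the intersection over all Conley attractors A of F of the sets A ∪ A*, where A* = X \ (basin of A) is the dual repeller of A. -/

import Mathlib

/-!
Let `x` be a point that is not chain recurrent, witnessed by `ε`. The set `R` of endpoints of
`ε`-chains starting at `x` does not contain `x`, and by uniform continuity a small thickening `U`
of `R ∪ {x}` is a trapping region: `F(closure U) ⊆ R ⊆ U`. The decreasing compact sets
`Fᵏ(closure U)` converge in the Hausdorff metric to their intersection `A ⊆ R`, a Conley
attractor whose basin contains `x ∉ A`.

Conversely, if `x` lies in an attracting neighbourhood `U` of `A` but not in `A`, pick a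
thickening `V` of `A` inside `U \ {x}` and `N` with `Fᴺ(closure U)` deep inside `V`. For small `ε`
an `ε`-chain of length `N` shadows a true orbit, so it carries points of `U` into `V`. Running an
`ε`-chain from `x` back to `x` around `N` times, each block of length `N` lands in `V`, and the
last one ends at `x ∉ V`: `x` is not chain recurrent.
-/

open Set Filter Metric Topology

/-- The set map of an IFS: `F(S) = ⋃ i, fᵢ(S)`. -/
def IFSApply {ι X : Type*} (f : ι → X → X) (S : Set X) : Set X := ⋃ i, f i '' S

/-- `lim_{k→∞} F^k(closure U) = A` in the Hausdorff (extended) metric. -/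
def ConleyLim {ι X : Type*} [MetricSpace X] (f : ι → X → X) (U A : Set X) : Prop :=
  Filter.Tendsto (fun k => EMetric.hausdorffEdist ((IFSApply f)^[k] (closure U)) A)
    Filter.atTop (nhds 0)

/-- A compact set `A` is a Conley attractor of the IFS `f` if there is an open `U ⊇ A`
with `A = lim_{k→∞} F^k(closure U)`. -/
def IsConleyAttractor {ι X : Type*} [MetricSpace X] (f : ι → X → X) (A : Set X) : Prop :=
  IsCompact A ∧ ∃ U : Set X, IsOpen U ∧ A ⊆ U ∧ ConleyLim f U A

/-- The basin of a Conley attractor: the union of all open sets `U` as in the definition. -/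
def conleyBasin {ι X : Type*} [MetricSpace X] (f : ι → X → X) (A : Set X) : Set X :=
  ⋃₀ {U : Set X | IsOpen U ∧ A ⊆ U ∧ ConleyLim f U A}

/-- `lim_{k→∞} F^k(S) = A` in the Hausdorff (extended) metric. -/
def IFSLim {ι X : Type*} [MetricSpace X] (f : ι → X → X) (S A : Set X) : Prop :=
  Filter.Tendsto (fun k => EMetric.hausdorffEdist ((IFSApply f)^[k] S) A)
    Filter.atTop (nhds 0)

/-- `A` is a strict attractor of the IFS `f`. -/
def IsStrictAttractor {ι X : Type*} [MetricSpace X] (f : ι → X → X) (A : Set X) : Prop :=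
  A.Nonempty ∧ IsCompact A ∧ IFSApply f A = A ∧
  ∃ U : Set X, IsOpen U ∧ A ⊆ U ∧
    ∀ S : Set X, S.Nonempty → IsCompact S → S ⊆ U → IFSLim f S A

/-- The basin of a strict attractor: the largest open `U` with
`lim_{k→∞} F^k(S) = A` for all nonempty compact `S ⊆ U`. -/
def strictBasin {ι X : Type*} [MetricSpace X] (f : ι → X → X) (A : Set X) : Set X :=
  ⋃₀ {U : Set X | IsOpen U ∧
    ∀ S : Set X, S.Nonempty → IsCompact S → S ⊆ U → IFSLim f S A}

/-- `x` is chain recurrent for the IFS `f`: for every `ε > 0` there is an `ε`-chain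
from `x` back to `x`. -/
def IsChainRecurrent {ι X : Type*} [MetricSpace X] (f : ι → X → X) (x : X) : Prop :=
  ∀ ε : ℝ, 0 < ε → ∃ n : ℕ, 0 < n ∧ ∃ c : ℕ → X, c 0 = x ∧ c n = x ∧
    ∀ i < n, ∃ j : ι, dist (c (i + 1)) (f j (c i)) < ε

theorem eventually_subset_thickening_of_tendsto_hausdorffEDist {α X : Type*}
    [PseudoEMetricSpace X] {l : Filter α} {G : α → Set X} {A : Set X}
    (h : Tendsto (fun k => hausdorffEDist (G k) A) l (𝓝 0)) {δ : ℝ} (hδ : 0 < δ) :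
    ∀ᶠ k in l, G k ⊆ thickening δ A := by
  filter_upwards [h.eventually (gt_mem_nhds (ENNReal.ofReal_pos.2 hδ))] with k hk y hy
  exact mem_thickening_iff_infEDist_lt.2 ((infEDist_le_hausdorffEDist_of_mem hy).trans_lt hk)

theorem tendsto_hausdorffEDist_iInter_of_antitone {X : Type*} [EMetricSpace X]
    {G : ℕ → Set X} (hG : Antitone G) (hc : ∀ k, IsCompact (G k)) :
    Tendsto (fun k => hausdorffEDist (G k) (⋂ k, G k)) atTop (𝓝 0) := by
  rw [ENNReal.tendsto_atTop_zero]
  intro δ hδ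
  obtain ⟨N, hN⟩ := exists_subset_nhds_of_isCompact' hG.directed_ge hc (fun k => (hc k).isClosed)
    (U := {y | infEDist y (⋂ k, G k) < δ}) fun y hy =>
      (isOpen_lt continuous_infEDist continuous_const).mem_nhds
        (show infEDist y _ < δ by rwa [infEDist_zero_of_mem hy])
  refine ⟨N, fun k hk => hausdorffEDist_le_of_infEDist (fun y hy => (hN (hG hk hy)).le)
    fun y hy => ?_⟩
  simp [infEDist_zero_of_mem (mem_iInter.1 hy k)]

section IFSApply

variable {ι X : Type*} {f : ι → X → X}

theorem mem_IFSApply {S : Set X} {y : X} : y ∈ IFSApply f S ↔ ∃ i, ∃ x ∈ S, f i x = y := by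
  simp [IFSApply]

theorem IFSApply_mono : Monotone (IFSApply f) :=
  fun _ _ h => iUnion_mono fun _ => image_mono h

theorem isCompact_IFSApply_iterate [TopologicalSpace X] [Finite ι] (hf : ∀ i, Continuous (f i))
    {S : Set X} (hS : IsCompact S) (k : ℕ) : IsCompact ((IFSApply f)^[k] S) := by
  induction k with
  | zero => exact hS
  | succ k ih =>
    rw [Function.iterate_succ_apply']
    exact isCompact_iUnion fun i => ih.image (hf i)

end IFSApply

section Chains

variable {ι X : Type*} [MetricSpace X]

def IsEpsChain (f : ι → X → X) (ε : ℝ) (n : ℕ) (c : ℕ → X) : Prop :=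
  ∀ i < n, ∃ j, dist (c (i + 1)) (f j (c i)) < ε

def epsChainReach (f : ι → X → X) (ε : ℝ) (x : X) : Set X :=
  {y | ∃ n, 0 < n ∧ ∃ c : ℕ → X, c 0 = x ∧ c n = y ∧ IsEpsChain f ε n c}

variable {f : ι → X → X} {ε : ℝ} {n : ℕ} {c : ℕ → X}

theorem isChainRecurrent_iff_forall_mem_epsChainReach {x : X} :
    IsChainRecurrent f x ↔ ∀ ε > 0, x ∈ epsChainReach f ε x :=
  Iff.rfl

theorem IsEpsChain.mono {ε' : ℝ} {m : ℕ} (hc : IsEpsChain f ε n c) (hε : ε ≤ ε') (hmn : m ≤ n) :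
    IsEpsChain f ε' m c :=
  fun i hi => (hc i (hi.trans_le hmn)).imp fun _ hj => hj.trans_le hε

theorem IsEpsChain.shift {i : ℕ} (hc : IsEpsChain f ε (i + n) c) :
    IsEpsChain f ε n (fun k => c (i + k)) :=
  fun k hk => hc (i + k) (by omega)

theorem IsEpsChain.update_succ {i : ι} {z : X} (hc : IsEpsChain f ε n c)
    (hz : dist z (f i (c n)) < ε) : IsEpsChain f ε (n + 1) (Function.update c (n + 1) z) := by
  intro k hk
  rcases Nat.lt_succ_iff_lt_or_eq.1 hk with hk | rfl
  · rw [Function.update_of_ne (by omega), Function.update_of_ne (by omega)]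
    exact hc k hk
  · rw [Function.update_self, Function.update_of_ne (by omega)]
    exact ⟨i, hz⟩

theorem IsEpsChain.comp_mod (hn : 0 < n) (hc : IsEpsChain f ε n c) (hcyc : c n = c 0) (m : ℕ) :
    IsEpsChain f ε m (fun i => c (i % n)) := by
  intro i _
  have hlt := Nat.mod_lt i hn
  have hwrap : c ((i + 1) % n) = c (i % n + 1) := by
    rw [← Nat.mod_add_mod]
    obtain h | h := (show i % n + 1 ≤ n from hlt).lt_or_eq
    · rw [Nat.mod_eq_of_lt h]
    · rw [h, Nat.mod_self, hcyc]
  simpa only [hwrap] using hc _ hlt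

theorem mem_epsChainReach_of_dist_lt {x y z : X} (hy : y ∈ insert x (epsChainReach f ε x)) {i : ι}
    (hz : dist z (f i y) < ε) : z ∈ epsChainReach f ε x := by
  obtain ⟨n, c, hc0, hcn, hc⟩ : ∃ n, ∃ c : ℕ → X, c 0 = x ∧ c n = y ∧ IsEpsChain f ε n c := by
    rcases hy with rfl | ⟨n, -, c, hc0, hcn, hc⟩
    · exact ⟨0, fun _ => y, rfl, rfl, fun _ h => absurd h (Nat.not_lt_zero _)⟩
    · exact ⟨n, c, hc0, hcn, hc⟩
  refine ⟨n + 1, n.succ_pos, _, ?_, Function.update_self .., hc.update_succ (hcn ▸ hz)⟩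
  rw [Function.update_of_ne (by omega), hc0]

end Chains

section Compact

variable {ι X : Type*} [MetricSpace X] [CompactSpace X] [Finite ι] {f : ι → X → X}

theorem uniformEquicontinuous_of_continuous (hf : ∀ i, Continuous (f i)) :
    UniformEquicontinuous f :=
  uniformEquicontinuous_finite.2 fun i => CompactSpace.uniformContinuous_of_continuous (hf i)

theorem exists_pos_isEpsChain_mem_thickening_iterate (hf : ∀ i, Continuous (f i)) (m : ℕ)
    {δ : ℝ} (hδ : 0 < δ) :
    ∃ ε > 0, ∀ c : ℕ → X, IsEpsChain f ε m c →
      c m ∈ thickening δ ((IFSApply f)^[m] {c 0}) := by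
  induction m generalizing δ with
  | zero => exact ⟨δ, hδ, fun c _ => self_subset_thickening hδ _ rfl⟩
  | succ m ih =>
    obtain ⟨s, hs, hmod⟩ :=
      Metric.uniformEquicontinuous_iff.1 (uniformEquicontinuous_of_continuous hf) _ (half_pos hδ)
    obtain ⟨ε, hε, hshadow⟩ := ih hs
    refine ⟨min ε (δ / 2), lt_min hε (half_pos hδ), fun c hc => ?_⟩
    obtain ⟨p, hp, hcp⟩ :=
      mem_thickening_iff.1 (hshadow c (hc.mono (min_le_left _ _) m.le_succ))
    obtain ⟨j, hj⟩ := hc m m.lt_succ_self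
    refine mem_thickening_iff.2 ⟨f j p, ?_, ?_⟩
    · rw [Function.iterate_succ_apply']
      exact mem_IFSApply.2 ⟨j, p, hp, rfl⟩
    · calc dist (c (m + 1)) (f j p)
          ≤ dist (c (m + 1)) (f j (c m)) + dist (f j (c m)) (f j p) := dist_triangle _ _ _
        _ < δ / 2 + δ / 2 := add_lt_add (hj.trans_le (min_le_right _ _)) (hmod _ _ hcp j)
        _ = δ := add_halves δ

theorem IsChainRecurrent.mem_of_conleyLim (hf : ∀ i, Continuous (f i)) {x : X} {A U : Set X}
    (hx : IsChainRecurrent f x) (hA : IsCompact A) (hU : IsOpen U) (hAU : A ⊆ U)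
    (hlim : ConleyLim f U A) (hxU : x ∈ U) : x ∈ A := by
  by_contra hxA
  have hAUx : A ⊆ U \ {x} := fun a ha => ⟨hAU ha, fun h : a = x => hxA (h ▸ ha)⟩
  obtain ⟨t, ht, htU⟩ := hA.exists_thickening_subset_open (hU.sdiff isClosed_singleton) hAUx
  obtain ⟨N, hN⟩ :=
    (eventually_subset_thickening_of_tendsto_hausdorffEDist hlim (half_pos ht)).exists
  obtain ⟨ε, hε, hshadow⟩ := exists_pos_isEpsChain_mem_thickening_iterate hf N (half_pos ht)
  obtain ⟨n, hn, c, hc0, hcn, hc⟩ := hx ε hε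
  set c' : ℕ → X := fun i => c (i % n)
  have hc' := IsEpsChain.comp_mod hn hc (hcn.trans hc0.symm)
  have hblock : ∀ i, c' i ∈ U → c' (i + N) ∈ thickening t A := by
    intro i hi
    have horbit : (IFSApply f)^[N] {c' i} ⊆ thickening (t / 2) A :=
      ((IFSApply_mono.iterate N) (singleton_subset_iff.2 (subset_closure hi))).trans hN
    have hend := hshadow (fun k => c' (i + k)) (hc' (i + N)).shift
    rw [add_zero] at hend
    simpa using thickening_thickening_subset _ _ _ (thickening_subset_of_subset _ horbit hend)
  have hmul : ∀ k, c' (k * N) ∈ U := by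
    intro k
    induction k with
    | zero => simpa [c', hc0] using hxU
    | succ k ih => rw [Nat.succ_mul]; exact (htU (hblock _ ih)).1
  obtain ⟨k, rfl⟩ : ∃ k, n = k + 1 := ⟨n - 1, by omega⟩
  refine (htU (hblock _ (hmul k))).2 ?_
  simp [c', ← Nat.succ_mul, hc0]

theorem isConleyAttractor_iInter_iterate (hf : ∀ i, Continuous (f i)) {U : Set X}
    (hUo : IsOpen U) (hU : IFSApply f (closure U) ⊆ U) :
    IsConleyAttractor f (⋂ k, (IFSApply f)^[k] (closure U)) ∧
      U ⊆ conleyBasin f (⋂ k, (IFSApply f)^[k] (closure U)) := by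
  have hcompact := isCompact_IFSApply_iterate hf (isClosed_closure (s := U)).isCompact
  have hanti : Antitone fun k => (IFSApply f)^[k] (closure U) := by
    refine antitone_nat_of_succ_le fun k => ?_
    rw [Function.iterate_succ_apply]
    exact IFSApply_mono.iterate k (hU.trans subset_closure)
  have hAU : ⋂ k, (IFSApply f)^[k] (closure U) ⊆ U := (iInter_subset _ 1).trans hU
  have hlim : ConleyLim f U _ := tendsto_hausdorffEDist_iInter_of_antitone hanti hcompact
  exact ⟨⟨(isClosed_iInter fun k => (hcompact k).isClosed).isCompact, U, hUo, hAU, hlim⟩,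
    subset_sUnion_of_mem ⟨hUo, hAU, hlim⟩⟩

theorem exists_thickening_maps_into_epsChainReach (hf : ∀ i, Continuous (f i)) {ε : ℝ}
    (hε : 0 < ε) (x : X) : ∃ s > 0, ∀ y ∈ thickening s (insert x (epsChainReach f ε x)),
      ∀ i, f i y ∈ epsChainReach f ε x := by
  obtain ⟨s, hs, hmod⟩ :=
    Metric.uniformEquicontinuous_iff.1 (uniformEquicontinuous_of_continuous hf) ε hε
  refine ⟨s, hs, fun y hy i => ?_⟩
  obtain ⟨w, hw, hyw⟩ := mem_thickening_iff.1 hy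
  exact mem_epsChainReach_of_dist_lt hw (hmod y w hyw i)

theorem exists_isConleyAttractor_of_not_isChainRecurrent (hf : ∀ i, Continuous (f i)) {x : X}
    (hx : ¬IsChainRecurrent f x) :
    ∃ A, IsConleyAttractor f A ∧ x ∉ A ∧ x ∈ conleyBasin f A := by
  obtain ⟨ε, hε, hxR⟩ : ∃ ε > 0, x ∉ epsChainReach f ε x := by
    simpa [isChainRecurrent_iff_forall_mem_epsChainReach] using hx
  obtain ⟨s, hs, hmaps⟩ := exists_thickening_maps_into_epsChainReach hf hε x
  set U := thickening (s / 2) (insert x (epsChainReach f ε x))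
  have hFU : IFSApply f (closure U) ⊆ epsChainReach f ε x := by
    intro z hz
    obtain ⟨i, y, hy, rfl⟩ := mem_IFSApply.1 hz
    exact hmaps y (cthickening_subset_thickening' hs (half_lt_self hs) _
      (closure_thickening_subset_cthickening _ _ hy)) i
  have hRU : insert x (epsChainReach f ε x) ⊆ U := self_subset_thickening (half_pos hs) _
  obtain ⟨hA, hUB⟩ := isConleyAttractor_iInter_iterate hf isOpen_thickening
    (hFU.trans ((subset_insert _ _).trans hRU))
  exact ⟨_, hA, fun hxA => hxR (hFU (mem_iInter.1 hxA 1)), hUB (hRU (mem_insert _ _))⟩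

end Compact

theorem chain_recurrent_eq_iInter_attractor_repeller_general {ι X : Type*} [MetricSpace X]
    [CompactSpace X] [Fintype ι] (f : ι → X ≃ₜ X) :
    {x : X | IsChainRecurrent (fun i => (f i : X → X)) x} =
      ⋂ A ∈ {A : Set X | IsConleyAttractor (fun i => (f i : X → X)) A},
        (A ∪ (conleyBasin (fun i => (f i : X → X)) A)ᶜ) := by
  have hf : ∀ i, Continuous (f i : X → X) := fun i => (f i).continuous
  ext x
  simp only [mem_ofPred_eq, mem_iInter, mem_union, mem_compl_iff]
  constructor
  · intro hx A hA
    refine or_iff_not_imp_right.2 fun hxB => ?_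
    obtain ⟨U, ⟨hUo, hAU, hlim⟩, hxU⟩ := not_not.1 hxB
    exact hx.mem_of_conleyLim hf hA.1 hUo hAU hlim hxU
  · intro h
    by_contra hx
    obtain ⟨A, hA, hxA, hxB⟩ := exists_isConleyAttractor_of_not_isChainRecurrent hf hx
    exact (h A hA).elim hxA (· hxB)

theorem chain_recurrent_eq_iInter_attractor_repeller {ι X : Type*} [MetricSpace X]
    [CompactSpace X] [Fintype ι] [Nonempty ι] (f : ι → X ≃ₜ X) :
    {x : X | IsChainRecurrent (fun i => (f i : X → X)) x} =
      ⋂ A ∈ {A : Set X | IsConleyAttractor (fun i => (f i : X → X)) A},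
        (A ∪ (conleyBasin (fun i => (f i : X → X)) A)ᶜ) :=
  chain_recurrent_eq_iInter_attractor_repeller_general f
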